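/- Let 0 < r2 < r1 ≤ 1/e and c2 > 0, and define u(r) = −c2·∫_r^∞ η(4s/r1)·ζ(s/(4r2)) / (s·log(1/s)) ds. Then for every r ∈ (0, r1]: −c2·log log(1/r) + c2·log log(1/r1) ≤ u(r) ≤ 0; in particular e^{−u(r)} ≤ (log(1/r))^{c2}. Moreover, u is constant on (0, 2r2]. -/

import Mathlib

/-- The fixed pair of smooth cutoff functions used in the cutoff-function
construction. -/
def CutoffPair (ζ η : ℝ → ℝ) : Prop :=
  ContDiff ℝ (⊤ : ℕ∞) ζ ∧ ContDiff ℝ (⊤ : ℕ∞) η ∧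
  (∀ x ∈ Set.Icc (0 : ℝ) (1 / 2), ζ x = 0) ∧ (∀ x ≥ (1 : ℝ), ζ x = 1) ∧
  (∀ x ≥ (0 : ℝ), 0 ≤ deriv ζ x ∧ deriv ζ x ≤ 4 ∧ |deriv (deriv ζ) x| ≤ 16) ∧
  (∀ x ∈ Set.Icc (0 : ℝ) (1 / 2), η x = 1) ∧ (∀ x ≥ (1 : ℝ), η x = 0) ∧
  (∀ x ≥ (0 : ℝ), -4 ≤ deriv η x ∧ deriv η x ≤ 0 ∧ |deriv (deriv η) x| ≤ 16)

/-- `u(r) = -c2 ∫_r^∞ η(4s/r1) ζ(s/(4r2)) / (s log(1/s)) ds`. -/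
noncomputable def uFun (ζ η : ℝ → ℝ) (c2 r1 r2 r : ℝ) : ℝ :=
  -c2 * ∫ s in Set.Ioi r, η (4 * s / r1) * ζ (s / (4 * r2)) / (s * Real.log (1 / s))

/-- pointwise bounds for the warping exponent `u`:
`-c2 log log(1/r) + c2 log log(1/r1) ≤ u ≤ 0`, hence
`e^{-u} ≤ (log(1/r))^{c2}`, on `(0, r1]`; and `u` is constant on `(0, 2r2]`. -/
theorem stmt_10 (ζ η : ℝ → ℝ) (hcut : CutoffPair ζ η)
    (r1 r2 c2 : ℝ) (hr20 : 0 < r2) (hr21 : r2 < r1)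
    (hr1 : r1 ≤ 1 / Real.exp 1) (hc2 : 0 < c2) :
    (∀ r ∈ Set.Ioc (0 : ℝ) r1,
      -c2 * Real.log (Real.log (1 / r)) + c2 * Real.log (Real.log (1 / r1))
          ≤ uFun ζ η c2 r1 r2 r ∧
        uFun ζ η c2 r1 r2 r ≤ 0 ∧
        Real.exp (-(uFun ζ η c2 r1 r2 r)) ≤ (Real.log (1 / r)) ^ c2) ∧
    (∀ r ∈ Set.Ioc (0 : ℝ) (2 * r2), ∀ r' ∈ Set.Ioc (0 : ℝ) (2 * r2),
      uFun ζ η c2 r1 r2 r = uFun ζ η c2 r1 r2 r') := by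
  obtain ⟨hζc, hηc, hζ0, hζ1, hζd, hη1, hη0, hηd⟩ := hcut
  have hr10 : 0 < r1 := hr20.trans hr21
  have hexp1 : (1 : ℝ) < Real.exp 1 := by
    have := Real.exp_one_gt_d9; linarith
  have hr1lt1 : r1 < 1 := lt_of_le_of_lt hr1 (by
    rw [div_lt_one (by positivity)]; exact hexp1)
  set f : ℝ → ℝ := fun s => η (4 * s / r1) * ζ (s / (4 * r2)) / (s * Real.log (1 / s))
    with hfdef
  have huF : ∀ r : ℝ, uFun ζ η c2 r1 r2 r = -c2 * ∫ s in Set.Ioi r, f s := fun _ => rfl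
  -- monotonicity and bounds for the cutoffs
  have hζmono : MonotoneOn ζ (Set.Ici 0) := by
    apply monotoneOn_of_deriv_nonneg (convex_Ici 0) hζc.continuous.continuousOn
      (hζc.differentiable (by simp)).differentiableOn
    intro x hx
    rw [interior_Ici] at hx
    exact (hζd x hx.le).1
  have hηanti : AntitoneOn η (Set.Ici 0) := by
    apply antitoneOn_of_deriv_nonpos (convex_Ici 0) hηc.continuous.continuousOn
      (hηc.differentiable (by simp)).differentiableOn
    intro x hx
    rw [interior_Ici] at hx
    exact (hηd x hx.le).2.1
  have hζ_nonneg : ∀ x ≥ (0 : ℝ), 0 ≤ ζ x := by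
    intro x hx
    have h0 : ζ 0 = 0 := hζ0 0 (by norm_num)
    calc (0:ℝ) = ζ 0 := h0.symm
      _ ≤ ζ x := hζmono (by norm_num) hx hx
  have hζ_le_one : ∀ x ≥ (0 : ℝ), ζ x ≤ 1 := by
    intro x hx
    rcases le_total x 1 with h | h
    · calc ζ x ≤ ζ 1 := hζmono hx (by norm_num) h
        _ = 1 := hζ1 1 le_rfl
    · rw [hζ1 x h]
  have hη_nonneg : ∀ x ≥ (0 : ℝ), 0 ≤ η x := by
    intro x hx
    rcases le_total x 1 with h | h
    · calc (0:ℝ) = η 1 := (hη0 1 le_rfl).symm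
        _ ≤ η x := hηanti hx (by norm_num) h
    · rw [hη0 x h]
  have hη_le_one : ∀ x ≥ (0 : ℝ), η x ≤ 1 := by
    intro x hx
    calc η x ≤ η 0 := hηanti (by norm_num) hx hx
      _ = 1 := hη1 0 (by norm_num)
  -- the integrand vanishes for large and small s
  have hf_zero_hi : ∀ s : ℝ, r1 ≤ 4 * s → f s = 0 := by
    intro s hs
    have hη' : η (4 * s / r1) = 0 := hη0 _ (by rw [ge_iff_le, le_div_iff₀ hr10]; linarith)
    simp only [hfdef, hη', zero_mul, zero_div]
  have hf_zero_lo : ∀ s : ℝ, 0 < s → s ≤ 2 * r2 → f s = 0 := by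
    intro s h0 h2
    have hζ' : ζ (s / (4 * r2)) = 0 := hζ0 _ ⟨by positivity,
      by rw [div_le_iff₀ (by positivity)]; linarith⟩
    simp only [hfdef, hζ', mul_zero, zero_div]
  -- denominator positivity
  have hden : ∀ s : ℝ, 0 < s → s < 1 → 0 < s * Real.log (1 / s) := by
    intro s h0 h1
    exact mul_pos h0 (Real.log_pos (by rw [lt_div_iff₀ h0]; linarith))
  constructor
  · rintro r ⟨hr0, hrr1⟩
    have hrlt1 : r < 1 := lt_of_le_of_lt hrr1 hr1lt1
    -- continuity of f on [r, r1]
    have hdenc : ContinuousOn (fun s : ℝ => s * Real.log (1 / s)) (Set.Icc r r1) := by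
      apply continuousOn_id.mul
      apply ContinuousOn.log
      · exact continuousOn_const.div continuousOn_id
          (fun x hx => (hr0.trans_le hx.1).ne')
      · intro x hx
        have : 0 < x := hr0.trans_le hx.1
        positivity
    have hfc : ContinuousOn f (Set.Icc r r1) := by
      apply ContinuousOn.div
      · exact ((hηc.continuous.comp ((continuous_const.mul continuous_id).div_const r1)).mul
          (hζc.continuous.comp (continuous_id.div_const (4 * r2)))).continuousOn
      · exact hdenc
      · intro x hx
        exact (hden x (hr0.trans_le hx.1) (lt_of_le_of_lt hx.2 hr1lt1)).ne'
    set g : ℝ → ℝ := fun s => (s * Real.log (1 / s))⁻¹ with hgdef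
    have hgc : ContinuousOn g (Set.Icc r r1) := hdenc.inv₀
      (fun x hx => (hden x (hr0.trans_le hx.1) (lt_of_le_of_lt hx.2 hr1lt1)).ne')
    -- Ioi integral equals Ioc integral
    have hind : (Set.Ioi r).indicator f = (Set.Ioc r r1).indicator f := by
      funext s
      by_cases hs : s ∈ Set.Ioc r r1
      · rw [Set.indicator_of_mem hs, Set.indicator_of_mem (Set.mem_Ioi.mpr hs.1)]
      · by_cases hs' : s ∈ Set.Ioi r
        · have hlt : r1 < s := by
            rw [Set.mem_Ioc, not_and] at hs
            exact lt_of_not_ge (hs hs')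
          rw [Set.indicator_of_mem hs', Set.indicator_of_notMem hs]
          exact hf_zero_hi s (by linarith)
        · rw [Set.indicator_of_notMem hs', Set.indicator_of_notMem hs]
    have hIoc : ∫ s in Set.Ioi r, f s = ∫ s in Set.Ioc r r1, f s := by
      rw [← MeasureTheory.integral_indicator measurableSet_Ioi, hind,
        MeasureTheory.integral_indicator measurableSet_Ioc]
    -- FTC for g
    have huIcc : Set.uIcc r r1 = Set.Icc r r1 := Set.uIcc_of_le hrr1
    have hderiv : ∀ s ∈ Set.uIcc r r1,
        HasDerivAt (fun x : ℝ => -Real.log (Real.log (1 / x))) (g s) s := by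
      intro s hs
      rw [huIcc] at hs
      have hs0 : 0 < s := hr0.trans_le hs.1
      have hs1 : s < 1 := lt_of_le_of_lt hs.2 hr1lt1
      have hlogpos : 0 < Real.log (1 / s) := Real.log_pos (by rw [lt_div_iff₀ hs0]; linarith)
      have h1 : HasDerivAt (fun x : ℝ => 1 / x) (-(s ^ 2)⁻¹) s := by
        simpa [one_div] using hasDerivAt_inv hs0.ne'
      have h2 : HasDerivAt (fun x : ℝ => Real.log (1 / x)) ((-(s ^ 2)⁻¹) / (1 / s)) s :=
        h1.log (by positivity)
      have h3 := (h2.log hlogpos.ne').neg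
      refine h3.congr_deriv ?_
      rw [hgdef]
      field_simp
    have hgint : MeasureTheory.IntegrableOn g (Set.Ioc r r1) :=
      (hgc.integrableOn_Icc).mono_set Set.Ioc_subset_Icc_self
    have hfint : MeasureTheory.IntegrableOn f (Set.Ioc r r1) :=
      (hfc.integrableOn_Icc).mono_set Set.Ioc_subset_Icc_self
    have hkey : ∫ s in Set.Ioc r r1, g s
        = Real.log (Real.log (1 / r)) - Real.log (Real.log (1 / r1)) := by
      rw [← intervalIntegral.integral_of_le hrr1]
      rw [intervalIntegral.integral_eq_sub_of_hasDerivAt hderiv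
        (ContinuousOn.intervalIntegrable (by rw [huIcc]; exact hgc))]
      ring
    have hf_nonneg : ∀ s ∈ Set.Ioc r r1, 0 ≤ f s := by
      intro s hs
      have hs0 : 0 < s := hr0.trans hs.1
      have hs1 : s < 1 := lt_of_le_of_lt hs.2 hr1lt1
      apply div_nonneg
      · exact mul_nonneg (hη_nonneg _ (by positivity)) (hζ_nonneg _ (by positivity))
      · exact (hden s hs0 hs1).le
    have hf_le : ∀ s ∈ Set.Ioc r r1, f s ≤ g s := by
      intro s hs
      have hs0 : 0 < s := hr0.trans hs.1
      have hs1 : s < 1 := lt_of_le_of_lt hs.2 hr1lt1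
      have hd := hden s hs0 hs1
      have hnum : η (4 * s / r1) * ζ (s / (4 * r2)) ≤ 1 :=
        mul_le_one₀ (hη_le_one _ (by positivity)) (hζ_nonneg _ (by positivity))
          (hζ_le_one _ (by positivity))
      have hfs : f s = (η (4 * s / r1) * ζ (s / (4 * r2))) / (s * Real.log (1 / s)) := rfl
      have hgs : g s = 1 / (s * Real.log (1 / s)) := (one_div _).symm
      rw [hfs, hgs]
      gcongr
    have hI0 : 0 ≤ ∫ s in Set.Ioc r r1, f s :=
      MeasureTheory.setIntegral_nonneg measurableSet_Ioc hf_nonneg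
    have hI1 : (∫ s in Set.Ioc r r1, f s) ≤ ∫ s in Set.Ioc r r1, g s :=
      MeasureTheory.setIntegral_mono_on hfint hgint measurableSet_Ioc hf_le
    rw [hkey] at hI1
    have huval : uFun ζ η c2 r1 r2 r = -c2 * ∫ s in Set.Ioc r r1, f s := by
      rw [huF, hIoc]
    have hlogr_pos : 0 < Real.log (1 / r) :=
      Real.log_pos (by rw [lt_div_iff₀ hr0]; linarith)
    have hll1 : 0 ≤ Real.log (Real.log (1 / r1)) := by
      apply Real.log_nonneg
      have h1 : r1 * Real.exp 1 ≤ 1 := (le_div_iff₀ (Real.exp_pos 1)).mp hr1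
      have h2 : Real.exp 1 ≤ 1 / r1 := (le_div_iff₀ hr10).mpr (by linarith)
      calc (1:ℝ) = Real.log (Real.exp 1) := (Real.log_exp 1).symm
        _ ≤ Real.log (1 / r1) := Real.log_le_log (Real.exp_pos 1) h2
    have hmul := mul_le_mul_of_nonneg_left hI1 hc2.le
    refine ⟨?_, ?_, ?_⟩
    · rw [huval]; nlinarith
    · rw [huval]
      exact mul_nonpos_of_nonpos_of_nonneg (by linarith) hI0
    · have hneg : -(uFun ζ η c2 r1 r2 r) ≤ c2 * Real.log (Real.log (1 / r)) := by
        rw [huval]; nlinarith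
      calc Real.exp (-(uFun ζ η c2 r1 r2 r))
          ≤ Real.exp (c2 * Real.log (Real.log (1 / r))) := Real.exp_le_exp.mpr hneg
        _ = (Real.log (1 / r)) ^ c2 := by
            rw [Real.rpow_def_of_pos hlogr_pos, mul_comm]
  · intro r hr r' hr'
    have key : ∀ a ∈ Set.Ioc (0 : ℝ) (2 * r2),
        (∫ s in Set.Ioi a, f s) = ∫ s in Set.Ioi (2 * r2), f s := by
      intro a ha
      rw [← MeasureTheory.integral_indicator measurableSet_Ioi,
        ← MeasureTheory.integral_indicator measurableSet_Ioi]
      congr 1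
      funext s
      by_cases hs : 2 * r2 < s
      · rw [Set.indicator_of_mem (Set.mem_Ioi.mpr hs),
          Set.indicator_of_mem (Set.mem_Ioi.mpr (ha.2.trans_lt hs))]
      · push_neg at hs
        have hmem2 : s ∉ Set.Ioi (2 * r2) := by simp [not_lt.mpr hs]
        by_cases hs' : a < s
        · rw [Set.indicator_of_mem (Set.mem_Ioi.mpr hs'), Set.indicator_of_notMem hmem2]
          exact hf_zero_lo s (ha.1.trans hs') hs
        · rw [Set.indicator_of_notMem (show s ∉ Set.Ioi a by simpa using hs'),
            Set.indicator_of_notMem hmem2]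
    rw [huF, huF, key r hr, key r' hr']
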